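/- Let Y₁, Y₂, … be i.i.d. Bernoulli(ψ*) random variables with ψ* ∈ (0.25, 0.75), and let Ȳₙ = (1/n)∑_{i=1}^n Yᵢ. Then almost surely there exists N₀ such that for all n > N₀, the ratio of the exact Bayesian normalizing constant p(Y₁,…,Yₙ) = Γ(nȲₙ+1)Γ(n(1-Ȳₙ)+1)/Γ(n+2) to its Laplace approximation L = (2π/n)^{1/2} Ȳₙ^{nȲₙ+1/2} (1-Ȳₙ)^{n(1-Ȳₙ)+1/2} satisfies |p/L - 1| ≥ 1/(26n). -/

import Mathlib

/-!
Write `k = n Ȳₙ` and `m = n - k`. The exact evidence is the Beta value `k! m! / (n + 1)!`, and in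
terms of the Stirling sequence `sⱼ = j! / (√(2j) (j/e)ʲ)` its ratio to the Laplace approximation is
exactly `n/(n+1) · sₖ sₘ / (√π sₙ)`. Since `√π ≤ sⱼ ≤ √π e^{1/(12j)}` (the upper bound by
telescoping Robbins' step estimate), the ratio is at most `n/(n+1) · eˣ` with
`x = 1/(12k) + 1/(12m)`. When `Ȳₙ ∈ (1/4, 3/4)` we get `x ≤ 4/(9n) ≤ 1/2`, and `eˣ ≤ 1 + 2x`
then keeps the ratio below `1 - 1/(9(n+1)) ≤ 1 - 1/(26n)`. By the strong law of large numbers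
`Ȳₙ → ψ ∈ (1/4, 3/4)` almost surely.
-/

open Real MeasureTheory ProbabilityTheory Finset

/-- Bernoulli(p) distribution on ℝ. -/
noncomputable def bernoulliReal (p : ℝ) : Measure ℝ :=
  ENNReal.ofReal p • Measure.dirac 1 + ENNReal.ofReal (1 - p) • Measure.dirac 0

open Filter Topology
open scoped Nat

namespace Stirling

theorem stirlingSeq_le_sqrt_pi_mul_exp {n : ℕ} (hn : n ≠ 0) :
    stirlingSeq n ≤ √π * exp (1 / (12 * n)) := by
  set f : ℕ → ℝ := fun j ↦ log (stirlingSeq (j + 1)) - 1 / (12 * (j + 1 : ℕ)) with hf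
  have hmono : Monotone f := monotone_nat_of_le_succ fun j ↦ by
    have hstep := log_stirlingSeq_sdiff_le (j + 1)
    have htel : (1 : ℝ) / (12 * (j + 1)) - 1 / (12 * (j + 1 + 1)) =
        1 / (12 * (j + 1) * (j + 1 + 1)) := by
      field_simp; ring
    simp only [hf]
    push_cast at hstep ⊢
    linarith
  have hlim : Tendsto f atTop (𝓝 (log √π - 0)) := by
    refine Tendsto.sub ?_ ?_
    · exact (continuousAt_log (by positivity)).tendsto.comp
        (tendsto_stirlingSeq_sqrt_pi.comp (tendsto_add_atTop_nat 1))
    · exact tendsto_const_nhds.div_atTop <| (tendsto_natCast_atTop_atTop.comp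
        (tendsto_add_atTop_nat 1)).const_mul_atTop (by norm_num)
  obtain ⟨j, rfl⟩ := Nat.exists_eq_succ_of_ne_zero hn
  have hj : f j ≤ log √π := by simpa using hmono.ge_of_tendsto hlim j
  rw [← exp_log (stirlingSeq'_pos j), ← exp_log (by positivity : 0 < √π), ← exp_add, exp_le_exp]
  simp only [hf] at hj
  push_cast at hj ⊢
  linarith

theorem factorial_eq_stirlingSeq_mul {n : ℕ} (hn : n ≠ 0) :
    (n ! : ℝ) = stirlingSeq n * (√2 * √n * (n / exp 1) ^ n) := by
  rw [stirlingSeq, ← sqrt_mul zero_le_two, div_mul_cancel₀]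
  positivity

end Stirling

open Stirling

theorem Real.rpow_natCast_add_half {x : ℝ} (hx : 0 ≤ x) (k : ℕ) :
    x ^ ((k : ℝ) + 1 / 2) = x ^ k * √x := by
  rw [rpow_add' hx (by positivity), rpow_natCast, sqrt_eq_rpow]

/-- The normalizing constant `∫₀¹ θ^{ny} (1-θ)^{n(1-y)} dθ` of the Bernoulli model with uniform
prior, written as a Beta function; `y` is the sample mean. -/
noncomputable def bernoulliEvidence (n : ℕ) (y : ℝ) : ℝ :=
  Gamma (n * y + 1) * Gamma (n * (1 - y) + 1) / Gamma (n + 2)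

noncomputable def bernoulliLaplaceApprox (n : ℕ) (y : ℝ) : ℝ :=
  √(2 * π / n) * y ^ (n * y + 1 / 2) * (1 - y) ^ (n * (1 - y) + 1 / 2)

section

variable {k m n : ℕ}

theorem bernoulliEvidence_natCast_div (hkm : k + m = n) (hn : n ≠ 0) :
    bernoulliEvidence n (k / n) = k ! * m ! / (n + 1)! := by
  subst hkm
  have hk : ((k + m : ℕ) : ℝ) * (k / (k + m : ℕ)) = k := mul_div_cancel₀ _ (by positivity)
  have hm : ((k + m : ℕ) : ℝ) * (1 - k / (k + m : ℕ)) = m := by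
    have : (k : ℝ) + m ≠ 0 := by exact_mod_cast hn
    push_cast; field_simp; ring
  have hn2 : ((k + m : ℕ) : ℝ) + 2 = ((k + m + 1 : ℕ) : ℝ) + 1 := by push_cast; ring
  rw [bernoulliEvidence, hk, hm, hn2, Gamma_nat_eq_factorial, Gamma_nat_eq_factorial,
    Gamma_nat_eq_factorial]

theorem bernoulliLaplaceApprox_natCast_div (hkm : k + m = n) (hn : n ≠ 0) :
    bernoulliLaplaceApprox n (k / n) =
      √(2 * π / n) * ((k : ℝ) / n) ^ ((k : ℝ) + 1 / 2) * ((m : ℝ) / n) ^ ((m : ℝ) + 1 / 2) := by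
  subst hkm
  have hm : 1 - (k : ℝ) / (k + m : ℕ) = m / (k + m : ℕ) := by
    have : (k : ℝ) + m ≠ 0 := by exact_mod_cast hn
    push_cast; field_simp; ring
  rw [bernoulliLaplaceApprox, hm, mul_div_cancel₀ _ (by positivity),
    mul_div_cancel₀ _ (by positivity)]

theorem bernoulliEvidence_div_laplaceApprox_eq (hk : k ≠ 0) (hm : m ≠ 0) (hkm : k + m = n) :
    bernoulliEvidence n (k / n) / bernoulliLaplaceApprox n (k / n) =
      n / (n + 1) * (stirlingSeq k * stirlingSeq m / (√π * stirlingSeq n)) := by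
  have hn : n ≠ 0 := by omega
  have hsn : 0 < stirlingSeq n := (sqrt_pos.2 pi_pos).trans_le (sqrt_pi_le_stirlingSeq hn)
  have hpow (j : ℕ) : ((j : ℝ) / exp 1) ^ j = ((j : ℝ) / n) ^ j * ((n : ℝ) / exp 1) ^ j := by
    rw [← mul_pow, div_mul_div_cancel₀ (by positivity)]
  have hsplit : ((n : ℝ) / exp 1) ^ n = ((n : ℝ) / exp 1) ^ k * ((n : ℝ) / exp 1) ^ m := by
    rw [← pow_add, hkm]
  rw [bernoulliEvidence_natCast_div hkm hn, bernoulliLaplaceApprox_natCast_div hkm hn,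
    Nat.factorial_succ, Nat.cast_mul, factorial_eq_stirlingSeq_mul hk,
    factorial_eq_stirlingSeq_mul hm, factorial_eq_stirlingSeq_mul hn,
    rpow_natCast_add_half (by positivity), rpow_natCast_add_half (by positivity), hpow k, hpow m,
    hsplit, sqrt_div' _ (Nat.cast_nonneg _), sqrt_div' _ (Nat.cast_nonneg _),
    sqrt_div' _ (Nat.cast_nonneg _), sqrt_mul zero_le_two]
  field_simp
  push_cast
  rw [sq_sqrt (Nat.cast_nonneg _)]
  ring

theorem bernoulliEvidence_div_laplaceApprox_le (hk : k ≠ 0) (hm : m ≠ 0) (hkm : k + m = n) :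
    bernoulliEvidence n (k / n) / bernoulliLaplaceApprox n (k / n) ≤
      n / (n + 1) * exp (1 / (12 * k) + 1 / (12 * m)) := by
  have hsqrt : √π * √π = π := mul_self_sqrt pi_pos.le
  have hnum : stirlingSeq k * stirlingSeq m ≤ π * exp (1 / (12 * k) + 1 / (12 * m)) :=
    calc stirlingSeq k * stirlingSeq m
        ≤ (√π * exp (1 / (12 * k))) * (√π * exp (1 / (12 * m))) := by
          gcongr
          · exact (sqrt_nonneg π).trans (sqrt_pi_le_stirlingSeq hm)
          · exact stirlingSeq_le_sqrt_pi_mul_exp hk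
          · exact stirlingSeq_le_sqrt_pi_mul_exp hm
      _ = π * exp (1 / (12 * k) + 1 / (12 * m)) := by
          rw [exp_add]
          linear_combination (exp (1 / (12 * k)) * exp (1 / (12 * m))) * hsqrt
  have hden : π ≤ √π * stirlingSeq n :=
    calc π = √π * √π := hsqrt.symm
      _ ≤ √π * stirlingSeq n := by
        gcongr
        exact sqrt_pi_le_stirlingSeq (by omega)
  rw [bernoulliEvidence_div_laplaceApprox_eq hk hm hkm]
  gcongr
  calc stirlingSeq k * stirlingSeq m / (√π * stirlingSeq n)
      ≤ π * exp (1 / (12 * k) + 1 / (12 * m)) / π := div_le_div₀ (by positivity) hnum pi_pos hden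
    _ = exp (1 / (12 * k) + 1 / (12 * m)) := mul_div_cancel_left₀ _ pi_pos.ne'

theorem one_div_le_abs_bernoulliEvidence_div_laplaceApprox_sub_one (hk : (n : ℝ) < 4 * k)
    (hm : (n : ℝ) < 4 * m) (hkm : k + m = n) :
    1 / (26 * n : ℝ) ≤ |bernoulliEvidence n (k / n) / bernoulliLaplaceApprox n (k / n) - 1| := by
  have hkR : (k : ℝ) + m = n := by exact_mod_cast hkm
  have hk0 : k ≠ 0 := by rintro rfl; push_cast at hkR hk; linarith
  have hm0 : m ≠ 0 := by rintro rfl; push_cast at hkR hm; linarith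
  have hn : (1 : ℝ) ≤ n := by exact_mod_cast (show 1 ≤ n by omega)
  set x : ℝ := 1 / (12 * k) + 1 / (12 * m) with hx
  -- `x = n / (12 k m)` and `16 k m - 3 n² = (4k - n)(4m - n) > 0`.
  have hx4 : x ≤ 4 / (9 * n) := by
    rw [hx, div_add_div _ _ (by positivity) (by positivity),
      div_le_div_iff₀ (by positivity) (by positivity)]
    nlinarith [mul_pos (sub_pos.2 hk) (sub_pos.2 hm)]
  have hx_half : x ≤ 1 / 2 := hx4.trans <| by rw [div_le_iff₀ (by positivity)]; linarith
  have hx0 : 0 ≤ x := by positivity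
  have hexp : exp x ≤ 1 + 2 * (4 / (9 * n)) :=
    calc exp x ≤ 1 / (1 - x) := exp_bound_div_one_sub_of_interval hx0 (by linarith)
      _ ≤ 1 + 2 * x := by rw [div_le_iff₀ (by linarith)]; nlinarith
      _ ≤ 1 + 2 * (4 / (9 * n)) := by linarith
  have hratio : bernoulliEvidence n (k / n) / bernoulliLaplaceApprox n (k / n) ≤
      1 - 1 / (9 * (n + 1)) :=
    calc _ ≤ n / (n + 1) * exp x := bernoulliEvidence_div_laplaceApprox_le hk0 hm0 hkm
      _ ≤ n / (n + 1) * (1 + 2 * (4 / (9 * n))) := by gcongr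
      _ = 1 - 1 / (9 * (n + 1)) := by field_simp; ring
  have h26 : 1 / (26 * n : ℝ) ≤ 1 / (9 * (n + 1)) :=
    one_div_le_one_div_of_le (by positivity) (by linarith)
  refine le_trans ?_ (neg_le_abs _)
  linarith

end

theorem one_div_le_abs_bernoulliEvidence_div_laplaceApprox_sub_one_of_mem_Ioo {k n : ℕ}
    (hy : (k : ℝ) / n ∈ Set.Ioo (1 / 4) (3 / 4)) :
    1 / (26 * n : ℝ) ≤ |bernoulliEvidence n (k / n) / bernoulliLaplaceApprox n (k / n) - 1| := by
  obtain ⟨hlo, hhi⟩ := hy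
  have hn : n ≠ 0 := by
    rintro rfl
    norm_num at hlo
  rw [lt_div_iff₀ (by positivity)] at hlo
  rw [div_lt_iff₀ (by positivity)] at hhi
  have hkn : k ≤ n := by exact_mod_cast (show (k : ℝ) ≤ n by linarith)
  refine one_div_le_abs_bernoulliEvidence_div_laplaceApprox_sub_one (by linarith) ?_
    (Nat.add_sub_cancel' hkn)
  rw [Nat.cast_sub hkn]
  linarith

theorem ae_eq_zero_or_eq_one_bernoulliReal (p : ℝ) : ∀ᵐ y ∂bernoulliReal p, y = 0 ∨ y = 1 := by
  rw [bernoulliReal, ae_add_measure_iff]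
  exact ⟨Measure.ae_smul_measure (by simp [ae_dirac_eq]) _,
    Measure.ae_smul_measure (by simp [ae_dirac_eq]) _⟩

theorem integrable_id_bernoulliReal (p : ℝ) : Integrable id (bernoulliReal p) :=
  ((integrable_dirac (by simp)).smul_measure ENNReal.ofReal_ne_top).add_measure
    ((integrable_dirac (by simp)).smul_measure ENNReal.ofReal_ne_top)

theorem integral_id_bernoulliReal {p : ℝ} (h0 : 0 ≤ p) (h1 : p ≤ 1) :
    ∫ y, y ∂bernoulliReal p = p := by
  rw [bernoulliReal, integral_add_measure, integral_smul_measure, integral_smul_measure,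
    integral_dirac, integral_dirac, ENNReal.toReal_ofReal h0, ENNReal.toReal_ofReal (by linarith)]
  · simp
  all_goals exact (integrable_dirac (by simp)).smul_measure ENNReal.ofReal_ne_top

theorem strong_law_ae_real_of_map_eq {Ω : Type*} [MeasurableSpace Ω] {μ : Measure Ω}
    {Y : ℕ → Ω → ℝ} {ν : Measure ℝ} (hmeas : ∀ i, AEMeasurable (Y i) μ) (hindep : iIndepFun Y μ)
    (hdist : ∀ i, μ.map (Y i) = ν) (hint : Integrable id ν) :
    ∀ᵐ ω ∂μ, Tendsto (fun n : ℕ ↦ (∑ i ∈ range n, Y i ω) / n) atTop (𝓝 (∫ y, y ∂ν)) := by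
  have hident (i : ℕ) : IdentDistrib (Y i) (Y 0) μ μ := ⟨hmeas i, hmeas 0, by rw [hdist, hdist]⟩
  have hint0 : Integrable (Y 0) μ := by
    rw [← hdist 0] at hint
    exact (integrable_map_measure hint.aestronglyMeasurable (hmeas 0)).1 hint
  have hmean : μ[Y 0] = ∫ y, y ∂ν := by
    rw [← hdist 0]
    exact (integral_map (hmeas 0) aestronglyMeasurable_id).symm
  simpa only [hmean] using
    strong_law_ae_real Y hint0 (fun i j hij ↦ hindep.indepFun hij) hident

theorem Finset.sum_eq_card_filter_eq_one {ι : Type*} {s : Finset ι} {f : ι → ℝ}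
    (h : ∀ i ∈ s, f i = 0 ∨ f i = 1) : ∑ i ∈ s, f i = #{i ∈ s | f i = 1} := by
  rw [natCast_card_filter]
  refine sum_congr rfl fun i hi ↦ ?_
  rcases h i hi with h | h <;> simp [h]

theorem bernoulli_laplace_stochastic_lower_general
    {Ω : Type*} [MeasurableSpace Ω] (μ : Measure Ω)
    (ψ : ℝ) (hψlo : (0.25 : ℝ) < ψ) (hψhi : ψ < (0.75 : ℝ))
    (Y : ℕ → Ω → ℝ)
    (hmeas : ∀ i, Measurable (Y i))
    (hindep : iIndepFun Y μ)
    (hdist : ∀ i, μ.map (Y i) = bernoulliReal ψ) :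
    ∀ᵐ ω ∂μ, ∃ N₀ : ℕ, ∀ n > N₀,
      let Ybar := (∑ i ∈ range n, Y i ω) / n
      let p := Real.Gamma (n * Ybar + 1) * Real.Gamma (n * (1 - Ybar) + 1)
                / Real.Gamma (n + 2)
      let L := Real.sqrt (2 * π / n) * Ybar ^ (n * Ybar + 1 / 2)
                * (1 - Ybar) ^ (n * (1 - Ybar) + 1 / 2)
      |p / L - 1| ≥ 1 / (26 * n) := by
  norm_num at hψlo hψhi
  have h01 : ∀ᵐ ω ∂μ, ∀ i, Y i ω = 0 ∨ Y i ω = 1 := ae_all_iff.2 fun i ↦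
    ae_of_ae_map (hmeas i).aemeasurable (hdist i ▸ ae_eq_zero_or_eq_one_bernoulliReal ψ)
  have hslln := strong_law_ae_real_of_map_eq (fun i ↦ (hmeas i).aemeasurable) hindep hdist
    (integrable_id_bernoulliReal ψ)
  rw [integral_id_bernoulliReal (by linarith) (by linarith)] at hslln
  filter_upwards [h01, hslln] with ω hω hlim
  obtain ⟨N, hN⟩ := eventually_atTop.1 (hlim (Ioo_mem_nhds hψlo hψhi))
  refine ⟨N, fun n hn ↦ ?_⟩
  have hsum := sum_eq_card_filter_eq_one fun i (_ : i ∈ range n) ↦ hω i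
  have hmem : (∑ i ∈ range n, Y i ω) / n ∈ Set.Ioo (1 / 4 : ℝ) (3 / 4) := hN n hn.le
  rw [hsum] at hmem
  show 1 / (26 * n : ℝ) ≤ |bernoulliEvidence n _ / bernoulliLaplaceApprox n _ - 1|
  rw [hsum]
  exact one_div_le_abs_bernoulliEvidence_div_laplaceApprox_sub_one_of_mem_Ioo hmem

/-- Stochastic lower bound for the Laplace approximation of the normalizing constant
of the Bernoulli model with uniform prior. -/
theorem bernoulli_laplace_stochastic_lower
    {Ω : Type*} [MeasurableSpace Ω] (μ : Measure Ω) [IsProbabilityMeasure μ]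
    (ψ : ℝ) (hψlo : (0.25 : ℝ) < ψ) (hψhi : ψ < (0.75 : ℝ))
    (Y : ℕ → Ω → ℝ)
    (hmeas : ∀ i, Measurable (Y i))
    (hindep : iIndepFun Y μ)
    (hdist : ∀ i, μ.map (Y i) = bernoulliReal ψ) :
    ∀ᵐ ω ∂μ, ∃ N₀ : ℕ, ∀ n > N₀,
      let Ybar := (∑ i ∈ range n, Y i ω) / n
      let p := Real.Gamma (n * Ybar + 1) * Real.Gamma (n * (1 - Ybar) + 1)
                / Real.Gamma (n + 2)
      let L := Real.sqrt (2 * π / n) * Ybar ^ (n * Ybar + 1 / 2)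
                * (1 - Ybar) ^ (n * (1 - Ybar) + 1 / 2)
      |p / L - 1| ≥ 1 / (26 * n) :=
  bernoulli_laplace_stochastic_lower_general μ ψ hψlo hψhi Y hmeas hindep hdist
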